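/- arXiv:1006.4686 — 3 statements merged into one kernel-verified Lean document; each statement's English description precedes it below -/
import Mathlib

section
/- Let b₁,…,b_r and c₁,…,c_r be nonnegative real numbers, and let β, γ ≥ 0 satisfy Σᵢ bᵢ(bᵢ+1)/2 = β(β+1)/2 and Σᵢ cᵢ(cᵢ+1)/2 = γ(γ+1)/2. Then Σᵢ (bᵢ+cᵢ)(bᵢ+cᵢ+1)/2 ≤ (β+γ)(β+γ+1)/2. -/
theorem sq_sum_le_of_sum_tri (r : ℕ) (b : Fin r → ℝ) (β : ℝ)
    (hb : ∀ i, 0 ≤ b i) (hβ : 0 ≤ β)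
    (h1 : ∑ i, b i * (b i + 1) / 2 = β * (β + 1) / 2) :
    ∑ i, (b i) ^ 2 ≤ β ^ 2 := by
  have key : ∑ i, (b i ^ 2 + b i) = β ^ 2 + β := by
    have := congrArg (fun x => 2 * x) h1
    simp only [Finset.mul_sum] at this ⊢
    calc ∑ i, (b i ^ 2 + b i) = ∑ i, 2 * (b i * (b i + 1) / 2) := by
          apply Finset.sum_congr rfl; intro i _; ring
      _ = 2 * (β * (β + 1) / 2) := this
      _ = β ^ 2 + β := by ring
  rcases le_or_gt β (∑ i, b i) with h | h
  · have : ∑ i, (b i) ^ 2 = β ^ 2 + β - ∑ i, b i := by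
      rw [← key, Finset.sum_add_distrib]; ring
    linarith
  · calc ∑ i, (b i) ^ 2 ≤ (∑ i, b i) ^ 2 :=
          Finset.sum_sq_le_sq_sum_of_nonneg (fun i _ => hb i)
      _ ≤ β ^ 2 := by
          have h0 : 0 ≤ ∑ i, b i := Finset.sum_nonneg (fun i _ => hb i)
          nlinarith

theorem concentration_lemma (r : ℕ) (b c : Fin r → ℝ) (β γ : ℝ)
    (hb : ∀ i, 0 ≤ b i) (hc : ∀ i, 0 ≤ c i) (hβ : 0 ≤ β) (hγ : 0 ≤ γ)
    (h1 : ∑ i, b i * (b i + 1) / 2 = β * (β + 1) / 2)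
    (h2 : ∑ i, c i * (c i + 1) / 2 = γ * (γ + 1) / 2) :
    ∑ i, (b i + c i) * (b i + c i + 1) / 2 ≤ (β + γ) * (β + γ + 1) / 2 := by
  have hbb := sq_sum_le_of_sum_tri r b β hb hβ h1
  have hcc := sq_sum_le_of_sum_tri r c γ hc hγ h2
  have hcs : (∑ i, b i * c i) ^ 2 ≤ (∑ i, (b i) ^ 2) * (∑ i, (c i) ^ 2) :=
    Finset.sum_mul_sq_le_sq_mul_sq _ _ _
  have hbc : ∑ i, b i * c i ≤ β * γ := by
    have h0 : 0 ≤ ∑ i, b i * c i :=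
      Finset.sum_nonneg (fun i _ => mul_nonneg (hb i) (hc i))
    have hb2 : 0 ≤ ∑ i, (b i) ^ 2 := Finset.sum_nonneg (fun i _ => sq_nonneg _)
    nlinarith [mul_nonneg hβ hγ]
  have expand : ∑ i, (b i + c i) * (b i + c i + 1) / 2
      = (∑ i, b i * (b i + 1) / 2) + (∑ i, c i * (c i + 1) / 2) + ∑ i, b i * c i := by
    rw [← Finset.sum_add_distrib, ← Finset.sum_add_distrib]
    apply Finset.sum_congr rfl; intro i _; ring
  rw [expand, h1, h2]; linarith
end

section
/- Fix an integer d ≥ 5 and define f : ℕ → ℤ by f(a) = C(a+3,3) − C(a−d+3,3) − 1 (the binomial coefficient C(n,3) being 0 when n < 3), and g(a) = (−1 + √(1+8f(a)))/2. Then for all integers a ≥ a' ≥ 1 with (a,a') ≠ (1,1) and (a,a') ≠ (2,1), one has g(a) + g(a') < g(a+a'). -/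
/-!
Write `2 g + 1 = √D` with `D = 1 + 8 f`. On each of the overlapping ranges `a < d` and
`d ≤ a + 3` the discriminant `D` is explicit: `3 D = 4 (a + 1) (a + 2) (a + 3) - 21`, resp.
`3 D = 3 d x ^ 2 + d ^ 3 - 4 d - 21` with `x = 2 a + 4 - d`. In both cases
`(4 D₁ - D₀ - D₂) ^ 2 ≤ 4 D₀ D₂` for consecutive values, which makes `√D`, hence `g`, discretely
convex on `a ≥ 1`. Convexity gives `g (a + 1) + g b ≤ g (a + b) + g 1`, and for `a ≥ 3` the
increment `g (a + 1) - g a ≥ g 4 - g 3 > 2 = g 1`. The remaining pair `(2, 2)` is numerical.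
-/

/-- `f d a = h⁰(O_S(a)) − 1` for a smooth surface `S ⊂ ℙ³` of degree `d`. -/
def fdeg (d a : ℕ) : ℤ := ((a + 3).choose 3 : ℤ) - ((a + 3 - d).choose 3 : ℤ) - 1

/-- `g d a` is the unique nonnegative real with `g(g+1)/2 = f d a`. -/
noncomputable def gdeg (d a : ℕ) : ℝ :=
  (-1 + Real.sqrt (1 + 8 * (fdeg d a : ℝ))) / 2

theorem Nat.six_mul_choose_three {R : Type*} [CommRing R] (m : ℕ) :
    6 * (m.choose 3 : R) = m * (m - 1) * (m - 2) := by
  rw [← Nat.cast_ofNat, ← Nat.cast_mul, show (6 : ℕ) = Nat.factorial 3 from rfl,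
    ← Nat.descFactorial_eq_factorial_mul_choose]
  rcases m with _ | _ | _ | k
  all_goals simp [Nat.descFactorial]
  ring

theorem Real.two_mul_sqrt_le_sqrt_add_sqrt {x y z : ℝ} (hx : 0 ≤ x) (hz : 0 ≤ z)
    (h : (4 * y - x - z) ^ 2 ≤ 4 * x * z) : 2 * √y ≤ √x + √z := by
  have hxz : 4 * y - x - z ≤ 2 * (√x * √z) :=
    calc 4 * y - x - z ≤ |4 * y - x - z| := le_abs_self _
      _ ≤ √(4 * x * z) := Real.abs_le_sqrt h
      _ = 2 * (√x * √z) := by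
        rw [show 4 * x * z = 2 ^ 2 * (x * z) by ring, Real.sqrt_mul (by positivity),
          Real.sqrt_sq zero_le_two, Real.sqrt_mul hx]
  calc 2 * √y = √(2 ^ 2 * y) := by rw [Real.sqrt_mul (by positivity), Real.sqrt_sq zero_le_two]
    _ ≤ √((√x + √z) ^ 2) :=
      Real.sqrt_le_sqrt (by nlinarith [Real.sq_sqrt hx, Real.sq_sqrt hz])
    _ = √x + √z := Real.sqrt_sq (by positivity)

theorem apply_add_one_add_apply_le {α : Type*} [AddCommGroup α] [PartialOrder α]
    [IsOrderedAddMonoid α] {g : ℕ → α} (hg : MonotoneOn (fun n ↦ g (n + 1) - g n) (Set.Ici 1))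
    (a : ℕ) {b : ℕ} (hb : 1 ≤ b) : g (a + 1) + g b ≤ g (a + b) + g 1 := by
  induction b, hb using Nat.le_induction with
  | base => exact le_rfl
  | succ b hb ih =>
    have hstep : g (b + 1) - g b ≤ g (a + b + 1) - g (a + b) :=
      hg hb (le_add_left hb) (Nat.le_add_left b a)
    calc g (a + 1) + g (b + 1) = g (a + 1) + g b + (g (b + 1) - g b) := by abel
      _ ≤ g (a + b) + g 1 + (g (a + b + 1) - g (a + b)) := add_le_add ih hstep
      _ = g (a + (b + 1)) + g 1 := by rw [← add_assoc]; abel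

/-- The discriminant of `g ^ 2 + g - 2 * fdeg d a`, so that `gdeg d a = (√(discr d a) - 1) / 2`. -/
noncomputable def discr (d a : ℕ) : ℝ := 1 + 8 * fdeg d a

theorem gdeg_eq (d a : ℕ) : gdeg d a = (√(discr d a) - 1) / 2 := by
  rw [gdeg, discr]; ring

theorem discr_of_lt {d a : ℕ} (h : a < d) :
    discr d a = (4 * ((a + 1) * (a + 2) * (a + 3)) - 21) / 3 := by
  have hc := Nat.six_mul_choose_three (R := ℝ) (a + 3)
  rw [discr, fdeg, Nat.choose_eq_zero_of_lt (show a + 3 - d < 3 by omega)]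
  push_cast at hc ⊢
  linear_combination 4 / 3 * hc

theorem discr_of_le {d a : ℕ} (h : d ≤ a + 3) :
    discr d a = (3 * d * (2 * a + 4 - d) ^ 2 + d ^ 3 - 4 * d - 21) / 3 := by
  have hc := Nat.six_mul_choose_three (R := ℝ) (a + 3)
  have hc' := Nat.six_mul_choose_three (R := ℝ) (a + 3 - d)
  rw [Nat.cast_sub h] at hc'
  rw [discr, fdeg]
  push_cast at hc hc' ⊢
  linear_combination 4 / 3 * hc - 4 / 3 * hc'

theorem cubic_nonneg_of_four_le {t : ℝ} (ht : 4 ≤ t) : 0 ≤ t ^ 3 - 4 * t - 21 := by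
  nlinarith [mul_nonneg (sub_nonneg.2 ht) (sub_nonneg.2 ht)]

theorem discr_nonneg {d : ℕ} (hd : 4 ≤ d) (a : ℕ) : 0 ≤ discr d a := by
  rcases lt_or_ge a d with h | h
  · rw [discr_of_lt h]
    have ha : (0 : ℝ) ≤ a := a.cast_nonneg
    nlinarith [pow_nonneg ha 3, pow_nonneg ha 2]
  · rw [discr_of_le (by omega)]
    have := cubic_nonneg_of_four_le (t := d) (by exact_mod_cast hd)
    have : 0 ≤ (d : ℝ) * (2 * a + 4 - d) ^ 2 := by positivity
    linarith

/- The ranges of `discr_of_lt` and `discr_of_le` overlap in three values, so every window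
`n, n + 1, n + 2` lies in one of them. -/
theorem discr_convex {d : ℕ} (hd : 4 ≤ d) {n : ℕ} (hn : 1 ≤ n) :
    (4 * discr d (n + 1) - discr d n - discr d (n + 2)) ^ 2
      ≤ 4 * discr d n * discr d (n + 2) := by
  rw [← sub_nonneg]
  rcases lt_or_ge (n + 2) d with h | h
  · have hb : (4 : ℝ) ≤ n + 3 := by norm_cast; omega
    have hpos : 0 ≤ 64 / 3 * ((n : ℝ) + 3) * ((n + 3) ^ 3 - 4 * (n + 3) - 21) := by
      have := cubic_nonneg_of_four_le hb
      positivity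
    convert hpos using 1
    rw [discr_of_lt (show n < d by omega), discr_of_lt (show n + 1 < d by omega), discr_of_lt h]
    push_cast
    ring
  · have hpos : 0 ≤ 64 / 3 * (d : ℝ) * (d ^ 3 - 4 * d - 21) := by
      have := cubic_nonneg_of_four_le (t := d) (by exact_mod_cast hd)
      positivity
    convert hpos using 1
    rw [discr_of_le (a := n) (by omega), discr_of_le (a := n + 1) (by omega),
      discr_of_le (a := n + 2) (by omega)]
    push_cast
    ring

theorem gdeg_sub_le_gdeg_sub {d : ℕ} (hd : 4 ≤ d) {n : ℕ} (hn : 1 ≤ n) :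
    gdeg d (n + 1) - gdeg d n ≤ gdeg d (n + 1 + 1) - gdeg d (n + 1) := by
  have := Real.two_mul_sqrt_le_sqrt_add_sqrt (discr_nonneg hd n) (discr_nonneg hd (n + 2))
    (discr_convex hd hn)
  simp only [gdeg_eq]
  linarith

theorem monotoneOn_gdeg_sub {d : ℕ} (hd : 4 ≤ d) :
    MonotoneOn (fun n ↦ gdeg d (n + 1) - gdeg d n) (Set.Ici 1) :=
  monotoneOn_nat_Ici_of_le_succ fun _ hn ↦ gdeg_sub_le_gdeg_sub hd hn

theorem discr_small {d : ℕ} (hd : 5 ≤ d) :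
    discr d 1 = 25 ∧ discr d 2 = 73 ∧ discr d 3 = 153 ∧ discr d 4 = 273 := by
  refine ⟨?_, ?_, ?_, ?_⟩ <;> rw [discr_of_lt (by omega)] <;> norm_num

theorem gdeg_one {d : ℕ} (hd : 5 ≤ d) : gdeg d 1 = 2 := by
  rw [gdeg_eq, (discr_small hd).1, show (25 : ℝ) = 5 ^ 2 by norm_num, Real.sqrt_sq (by norm_num)]
  norm_num

theorem gdeg_three_add_two_lt {d : ℕ} (hd : 5 ≤ d) : gdeg d 3 + 2 < gdeg d 4 := by
  obtain ⟨-, -, h3, h4⟩ := discr_small hd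
  have h153 : √153 < 12.37 := (Real.sqrt_lt' (by norm_num)).2 (by norm_num)
  have h273 : 16.52 < √273 := (Real.lt_sqrt (by norm_num)).2 (by norm_num)
  rw [gdeg_eq, gdeg_eq, h3, h4]
  linarith

theorem gdeg_two_add_gdeg_two_lt {d : ℕ} (hd : 5 ≤ d) : gdeg d 2 + gdeg d 2 < gdeg d 4 := by
  obtain ⟨-, h2, -, h4⟩ := discr_small hd
  have h73 : √73 < 8.55 := (Real.sqrt_lt' (by norm_num)).2 (by norm_num)
  have h273 : 16.52 < √273 := (Real.lt_sqrt (by norm_num)).2 (by norm_num)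
  rw [gdeg_eq, gdeg_eq, h2, h4]
  linarith

theorem superadditive (d : ℕ) (hd : 5 ≤ d) (a a' : ℕ)
    (ha' : 1 ≤ a') (haa : a' ≤ a)
    (h1 : ¬(a = 1 ∧ a' = 1)) (h2 : ¬(a = 2 ∧ a' = 1)) :
    gdeg d a + gdeg d a' < gdeg d (a + a') := by
  have hmono := monotoneOn_gdeg_sub (d := d) (by omega)
  obtain ⟨rfl, rfl⟩ | ha := show (a = 2 ∧ a' = 2) ∨ 3 ≤ a by omega
  · exact gdeg_two_add_gdeg_two_lt hd
  · have hmaj := apply_add_one_add_apply_le hmono a ha'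
    have hstep : gdeg d 4 - gdeg d 3 ≤ gdeg d (a + 1) - gdeg d a :=
      hmono (Set.mem_Ici.2 (by norm_num)) (Set.mem_Ici.2 (by omega)) ha
    linarith [gdeg_one hd, gdeg_three_add_two_lt hd]
end

section
/- Fix d ≥ 5 and set f(a) = C(a+3,3) − C(a−d+3,3) − 1 (with C(n,3) = 0 for n < 3) and g(a) = (−1+√(1+8f(a)))/2. Then for every integer k ≥ 2, g(k+1) − g(k) > g(k) − g(k−1). -/
lemma choose2_int (e : ℕ) : 2 * ((e.choose 2 : ℤ)) = e * (e - 1) := by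
  induction e with
  | zero => simp
  | succ n ih =>
    rw [Nat.choose_succ_succ]
    simp only [Nat.choose_one_right]
    push_cast
    push_cast at ih
    nlinarith [ih]

lemma choose3_int (e : ℕ) : 6 * ((e.choose 3 : ℤ)) = e * (e - 1) * (e - 2) := by
  induction e with
  | zero => simp
  | succ n ih =>
    rw [Nat.choose_succ_succ]
    have h2 := choose2_int n
    push_cast
    push_cast at ih h2
    nlinarith [ih, h2]

lemma sqrt_key (A B C : ℝ) (hA : 0 ≤ A) (hB : 0 ≤ B) (hC : 0 ≤ C)
    (h : (4 * C - A - B) ^ 2 < 4 * (A * B)) :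
    2 * Real.sqrt C < Real.sqrt A + Real.sqrt B := by
  set x := Real.sqrt A with hx
  set y := Real.sqrt B with hy
  set z := Real.sqrt C with hz
  have hx2 : x ^ 2 = A := Real.sq_sqrt hA
  have hy2 : y ^ 2 = B := Real.sq_sqrt hB
  have hz2 : z ^ 2 = C := Real.sq_sqrt hC
  have hxn : 0 ≤ x := Real.sqrt_nonneg A
  have hyn : 0 ≤ y := Real.sqrt_nonneg B
  have hzn : 0 ≤ z := Real.sqrt_nonneg C
  by_contra hcon
  push_neg at hcon
  have h1 : (x + y) ^ 2 ≤ (2 * z) ^ 2 := by nlinarith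
  have h2 : 2 * (x * y) ≤ 4 * z ^ 2 - x ^ 2 - y ^ 2 := by nlinarith
  have h3 : 0 ≤ x * y := mul_nonneg hxn hyn
  nlinarith [sq_nonneg (4 * z ^ 2 - x ^ 2 - y ^ 2 - 2 * (x * y))]

set_option maxHeartbeats 1000000 in
theorem consecutive_differences (d : ℕ) (hd : 5 ≤ d) (k : ℕ) (hk : 2 ≤ k) :
    gdeg d k - gdeg d (k - 1) < gdeg d (k + 1) - gdeg d k := by
  obtain ⟨m, rfl⟩ : ∃ m, k = m + 2 := ⟨k - 2, by omega⟩
  have hsub : m + 2 - 1 = m + 1 := by omega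
  have h31 : m + 2 + 1 = m + 3 := by omega
  rw [hsub, h31]
  set FB := ((fdeg d (m + 1) : ℝ)) with hFB
  set FC := ((fdeg d (m + 2) : ℝ)) with hFC
  set FA := ((fdeg d (m + 3) : ℝ)) with hFA
  suffices h : 2 * Real.sqrt (1 + 8 * FC) < Real.sqrt (1 + 8 * FA) + Real.sqrt (1 + 8 * FB) by
    simp only [gdeg, ← hFA, ← hFB, ← hFC]
    linarith
  -- establish polynomial identities for FA FB FC, split into two regimes
  by_cases hc : m + 4 ≤ d
  · -- regime 1: the correction terms vanish
    have hz : ∀ a : ℕ, a ≤ m + 3 → ((a + 3 - d).choose 3 : ℤ) = 0 := by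
      intro a ha
      rw [Nat.choose_eq_zero_of_lt (by omega)]
      simp
    have idB : 6 * FB = ((m : ℝ) + 2) * (m + 3) * (m + 4) - 6 := by
      have h1 : 6 * fdeg d (m + 1) = ((m : ℤ) + 2) * (m + 3) * (m + 4) - 6 := by
        unfold fdeg
        rw [hz (m + 1) (by omega)]
        have := choose3_int (m + 1 + 3)
        push_cast at this ⊢
        linarith
      rw [hFB]
      exact_mod_cast congrArg (Int.cast : ℤ → ℝ) h1
    have idC : 6 * FC = ((m : ℝ) + 3) * (m + 4) * (m + 5) - 6 := by
      have h1 : 6 * fdeg d (m + 2) = ((m : ℤ) + 3) * (m + 4) * (m + 5) - 6 := by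
        unfold fdeg
        rw [hz (m + 2) (by omega)]
        have := choose3_int (m + 2 + 3)
        push_cast at this ⊢
        linarith
      rw [hFC]
      exact_mod_cast congrArg (Int.cast : ℤ → ℝ) h1
    have idA : 6 * FA = ((m : ℝ) + 4) * (m + 5) * (m + 6) - 6 := by
      have h1 : 6 * fdeg d (m + 3) = ((m : ℤ) + 4) * (m + 5) * (m + 6) - 6 := by
        unfold fdeg
        rw [hz (m + 3) (by omega)]
        have := choose3_int (m + 3 + 3)
        push_cast at this ⊢
        linarith
      rw [hFA]
      exact_mod_cast congrArg (Int.cast : ℤ → ℝ) h1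
    have hm : (0 : ℝ) ≤ (m : ℝ) := Nat.cast_nonneg m
    have hSB : 6 * (1 + 8 * FB) = 8*(m:ℝ)^3 + 72*(m:ℝ)^2 + 208*(m:ℝ) + 150 := by nlinarith [idB]
    have hSC : 6 * (1 + 8 * FC) = 8*(m:ℝ)^3 + 96*(m:ℝ)^2 + 376*(m:ℝ) + 438 := by nlinarith [idC]
    have hSA : 6 * (1 + 8 * FA) = 8*(m:ℝ)^3 + 120*(m:ℝ)^2 + 592*(m:ℝ) + 918 := by nlinarith [idA]
    apply sqrt_key
    · nlinarith [hSA, hm, pow_nonneg hm 2, pow_nonneg hm 3]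
    · nlinarith [hSB, hm, pow_nonneg hm 2, pow_nonneg hm 3]
    · nlinarith [hSC, hm, pow_nonneg hm 2, pow_nonneg hm 3]
    · have key : (4 * (6*(1 + 8 * FC)) - 6*(1 + 8 * FA) - 6*(1 + 8 * FB)) ^ 2
          < 4 * ((6*(1 + 8 * FA)) * (6*(1 + 8 * FB))) := by
        rw [hSA, hSB, hSC]
        nlinarith [hm, pow_nonneg hm 2, pow_nonneg hm 3, pow_nonneg hm 4]
      nlinarith [key]
  · -- regime 2: d ≤ m + 3
    obtain ⟨j, i, rfl, rfl⟩ : ∃ j i, d = j + 5 ∧ m = i + j + 2 :=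
      ⟨d - 5, m - (d - 5) - 2, by omega, by omega⟩
    have e1 : i + j + 2 + 1 + 3 - (j + 5) = i + 1 := by omega
    have e2 : i + j + 2 + 2 + 3 - (j + 5) = i + 2 := by omega
    have e3 : i + j + 2 + 3 + 3 - (j + 5) = i + 3 := by omega
    have hi : (0 : ℝ) ≤ (i : ℝ) := Nat.cast_nonneg i
    have hj : (0 : ℝ) ≤ (j : ℝ) := Nat.cast_nonneg j
    have idB : 6 * FB = ((i : ℝ) + (j : ℝ) + 4) * ((i:ℝ) + j + 5) * ((i:ℝ) + j + 6)
        - ((i : ℝ) + 1) * (i : ℝ) * ((i : ℝ) - 1) - 6 := by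
      have h1 : 6 * fdeg (j + 5) (i + j + 2 + 1) =
          ((i : ℤ) + j + 4) * ((i:ℤ) + j + 5) * ((i:ℤ) + j + 6)
          - ((i : ℤ) + 1) * (i : ℤ) * ((i : ℤ) - 1) - 6 := by
        unfold fdeg
        rw [e1]
        have ha := choose3_int (i + j + 2 + 1 + 3)
        have hb := choose3_int (i + 1)
        push_cast at ha hb ⊢
        linarith
      rw [hFB]
      exact_mod_cast congrArg (Int.cast : ℤ → ℝ) h1
    have idC : 6 * FC = ((i : ℝ) + (j : ℝ) + 5) * ((i:ℝ) + j + 6) * ((i:ℝ) + j + 7)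
        - ((i : ℝ) + 2) * ((i : ℝ) + 1) * (i : ℝ) - 6 := by
      have h1 : 6 * fdeg (j + 5) (i + j + 2 + 2) =
          ((i : ℤ) + j + 5) * ((i:ℤ) + j + 6) * ((i:ℤ) + j + 7)
          - ((i : ℤ) + 2) * ((i : ℤ) + 1) * (i : ℤ) - 6 := by
        unfold fdeg
        rw [e2]
        have ha := choose3_int (i + j + 2 + 2 + 3)
        have hb := choose3_int (i + 2)
        push_cast at ha hb ⊢
        linarith
      rw [hFC]
      exact_mod_cast congrArg (Int.cast : ℤ → ℝ) h1
    have idA : 6 * FA = ((i : ℝ) + (j : ℝ) + 6) * ((i:ℝ) + j + 7) * ((i:ℝ) + j + 8)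
        - ((i : ℝ) + 3) * ((i : ℝ) + 2) * ((i : ℝ) + 1) - 6 := by
      have h1 : 6 * fdeg (j + 5) (i + j + 2 + 3) =
          ((i : ℤ) + j + 6) * ((i:ℤ) + j + 7) * ((i:ℤ) + j + 8)
          - ((i : ℤ) + 3) * ((i : ℤ) + 2) * ((i : ℤ) + 1) - 6 := by
        unfold fdeg
        rw [e3]
        have ha := choose3_int (i + j + 2 + 3 + 3)
        have hb := choose3_int (i + 3)
        push_cast at ha hb ⊢
        linarith
      rw [hFA]
      exact_mod_cast congrArg (Int.cast : ℤ → ℝ) h1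
    have hSB : 6 * (1 + 8 * FB) = 918 + 592*(j:ℝ) + 120*(j:ℝ)^2 + 8*(j:ℝ)^3 + 600*(i:ℝ) + 240*(i:ℝ)*(j:ℝ) + 24*(i:ℝ)*(j:ℝ)^2 + 120*(i:ℝ)^2 + 24*(i:ℝ)^2*(j:ℝ) := by nlinarith [idB]
    have hSC : 6 * (1 + 8 * FC) = 1638 + 856*(j:ℝ) + 144*(j:ℝ)^2 + 8*(j:ℝ)^3 + 840*(i:ℝ) + 288*(i:ℝ)*(j:ℝ) + 24*(i:ℝ)*(j:ℝ)^2 + 120*(i:ℝ)^2 + 24*(i:ℝ)^2*(j:ℝ) := by nlinarith [idC]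
    have hSA : 6 * (1 + 8 * FA) = 2598 + 1168*(j:ℝ) + 168*(j:ℝ)^2 + 8*(j:ℝ)^3 + 1080*(i:ℝ) + 336*(i:ℝ)*(j:ℝ) + 24*(i:ℝ)*(j:ℝ)^2 + 120*(i:ℝ)^2 + 24*(i:ℝ)^2*(j:ℝ) := by nlinarith [idA]
    apply sqrt_key
    · nlinarith [hSA, hi, hj, mul_nonneg hi hj, mul_nonneg (mul_nonneg hi hi) hj, mul_nonneg (mul_nonneg hi hj) hj, pow_nonneg hj 2, pow_nonneg hj 3, mul_nonneg hi (pow_nonneg hj 2)]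
    · nlinarith [hSB, hi, hj, mul_nonneg hi hj, mul_nonneg (mul_nonneg hi hi) hj, mul_nonneg (mul_nonneg hi hj) hj, pow_nonneg hj 2, pow_nonneg hj 3, mul_nonneg hi (pow_nonneg hj 2)]
    · nlinarith [hSC, hi, hj, mul_nonneg hi hj, mul_nonneg (mul_nonneg hi hi) hj, mul_nonneg (mul_nonneg hi hj) hj, pow_nonneg hj 2, pow_nonneg hj 3, mul_nonneg hi (pow_nonneg hj 2)]
    · have key : (4 * (6*(1 + 8 * FC)) - 6*(1 + 8 * FA) - 6*(1 + 8 * FB)) ^ 2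
          < 4 * ((6*(1 + 8 * FA)) * (6*(1 + 8 * FB))) := by
        rw [hSA, hSB, hSC]
        nlinarith [hj, pow_nonneg hj 2, pow_nonneg hj 3, pow_nonneg hj 4]
      nlinarith [key]
end
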